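/- arXiv:1407.4545 — 2 statements merged into one kernel-verified Lean document; each statement's English description precedes it below -/
import Mathlib

section
/- There exists a positive constant c₁ such that for all real σ ≥ 1/2 and all real t with |t| ≥ 2, |ζ(σ + it)| ≤ c₁ |t|^{1/2}. -/
open Complex

/-!
For `0 < Re s`, `s ≠ 1` and every `N`,
`ζ(s) = ∑_{n<N} (n+1)^{-s} - (N+1)^{1-s}/(1-s)`
`       + ∑_{n ≥ N} ((n+1)^{-s} - ∫_{n+1}^{n+2} x^{-s} dx)`.
For `Re s > 1` this compares the Dirichlet series with `∫_1^∞ x^{-s} dx = 1/(s-1)`;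
it continues analytically to `Re s > 0` because, by the mean value theorem, the `n`-th bracket
is at most `|s| (n+1)^{-Re s-1}`. For `s = σ + it` with `σ ≥ 1/2` take `N = ⌊|t|⌋`: the
partial sum is at most `2√N`, the boundary term at most `√(N+1)/|t| ≤ 1`, and the tail at most
`|s| N^{-σ}/σ ≤ (1 + 2|t|)/√N ≤ 5√N`.
-/

open Filter Set MeasureTheory intervalIntegral
open scoped Topology Interval

noncomputable def zetaTerm (n : ℕ) (s : ℂ) : ℂ :=
  (n + 1 : ℂ) ^ (-s) - ∫ x in (n + 1 : ℝ)..(n + 2), (x : ℂ) ^ (-s)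

lemma zetaTerm_eq {s : ℂ} (hs : s ≠ 1) (n : ℕ) :
    zetaTerm n s =
      (n + 1 : ℂ) ^ (-s) - ((n + 2 : ℂ) ^ (1 - s) - (n + 1 : ℂ) ^ (1 - s)) / (1 - s) := by
  have h0 : (0 : ℝ) ∉ [[(n + 1 : ℝ), n + 2]] := by
    rw [uIcc_of_le (by linarith)]
    exact fun h => by linarith [h.1]
  rw [zetaTerm, integral_cpow (Or.inr ⟨by simpa [neg_inj] using hs, h0⟩), neg_add_eq_sub]
  push_cast
  rfl

lemma sum_range_zetaTerm {s : ℂ} (hs : s ≠ 1) (N : ℕ) :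
    ∑ n ∈ Finset.range N, zetaTerm n s =
      ∑ n ∈ Finset.range N, (n + 1 : ℂ) ^ (-s) - ((N + 1 : ℂ) ^ (1 - s) - 1) / (1 - s) := by
  have h := Finset.sum_range_sub (fun n : ℕ => (n + 1 : ℂ) ^ (1 - s) / (1 - s)) N
  simp only [Nat.cast_add_one, Nat.cast_zero, zero_add, Complex.one_cpow, add_assoc,
    one_add_one_eq_two, Finset.sum_sub_distrib] at h
  simp only [zetaTerm_eq hs, Finset.sum_sub_distrib, sub_div, ← h]

lemma norm_zetaTerm_le {s : ℂ} (hs : -1 ≤ s.re) (n : ℕ) :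
    ‖zetaTerm n s‖ ≤ ‖s‖ * ((n : ℝ) + 1) ^ (-s.re - 1) := by
  set a : ℝ := n + 1 with ha_def
  have ha : 0 < a := by positivity
  set C := ‖s‖ * a ^ (-s.re - 1)
  have hderiv : ∀ x ∈ Icc a (a + 1), HasDerivWithinAt (fun y : ℝ => (y : ℂ) ^ (-s))
      (-s * (x : ℂ) ^ (-s - 1)) (Icc a (a + 1)) x := fun x hx =>
    (hasStrictDerivAt_cpow_const (ofReal_mem_slitPlane.2 (ha.trans_le hx.1))).hasDerivAt
      |>.comp_ofReal.hasDerivWithinAt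
  have hbound : ∀ x ∈ Icc a (a + 1), ‖-s * (x : ℂ) ^ (-s - 1)‖ ≤ C := fun x hx => by
    rw [norm_mul, norm_neg, norm_cpow_eq_rpow_re_of_pos (ha.trans_le hx.1),
      show (-s - 1).re = -s.re - 1 by simp]
    exact mul_le_mul_of_nonneg_left (Real.rpow_le_rpow_of_nonpos ha hx.1 (by linarith))
      (norm_nonneg s)
  have hdiff : ∀ x ∈ Ι a (a + 1), ‖(a : ℂ) ^ (-s) - (x : ℂ) ^ (-s)‖ ≤ C := by
    intro x hx
    rw [uIoc_of_le (by linarith)] at hx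
    rw [norm_sub_rev]
    calc _ ≤ C * ‖x - a‖ :=
          (convex_Icc a (a + 1)).norm_image_sub_le_of_norm_hasDerivWithin_le
            hderiv hbound (left_mem_Icc.2 (by linarith)) (Ioc_subset_Icc_self hx)
      _ ≤ C * 1 := by
          gcongr
          rw [Real.norm_eq_abs, abs_le]
          constructor <;> linarith [hx.1, hx.2]
      _ = C := mul_one C
  have h0 : (0 : ℝ) ∉ [[a, a + 1]] := by
    rw [uIcc_of_le (by linarith)]
    exact fun h => by linarith [h.1]
  have hrep : zetaTerm n s = ∫ x in a..a + 1, ((a : ℂ) ^ (-s) - (x : ℂ) ^ (-s)) := by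
    rw [integral_sub intervalIntegrable_const (intervalIntegrable_cpow (Or.inr h0)),
      intervalIntegral.integral_const, add_sub_cancel_left, one_smul, zetaTerm, ha_def]
    push_cast
    ring_nf
  calc ‖zetaTerm n s‖ ≤ C * |a + 1 - a| := hrep ▸ norm_integral_le_of_norm_le_const hdiff
    _ = C := by simp

lemma norm_natCast_add_one_cpow (n : ℕ) (s : ℂ) :
    ‖(n + 1 : ℂ) ^ s‖ = ((n : ℝ) + 1) ^ s.re := by
  exact_mod_cast norm_natCast_cpow_of_pos n.succ_pos s

lemma summable_rpow_nat_add_one {q : ℝ} (hq : q < -1) :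
    Summable fun n : ℕ => ((n : ℝ) + 1) ^ q := by
  simpa using (summable_nat_add_iff 1).2 (Real.summable_nat_rpow.2 hq)

lemma summable_zetaTerm {s : ℂ} (hs : 0 < s.re) : Summable (zetaTerm · s) :=
  .of_norm_bounded ((summable_rpow_nat_add_one (by linarith)).mul_left ‖s‖)
    (norm_zetaTerm_le (by linarith))

lemma tendsto_natCast_add_one_cpow_atTop {s : ℂ} (hs : s.re < 0) :
    Tendsto (fun N : ℕ => (N + 1 : ℂ) ^ s) atTop (𝓝 0) := by
  rw [tendsto_zero_iff_norm_tendsto_zero]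
  simp only [norm_natCast_add_one_cpow]
  exact ((tendsto_rpow_neg_atTop (neg_pos.2 hs)).comp
    (tendsto_atTop_add_const_right _ 1 tendsto_natCast_atTop_atTop)).congr (by simp)

lemma hasSum_natCast_add_one_cpow_neg {s : ℂ} (hs : 1 < s.re) :
    HasSum (fun n : ℕ => (n + 1 : ℂ) ^ (-s)) (riemannZeta s) := by
  have hsum : Summable fun n : ℕ => 1 / (n + 1 : ℂ) ^ s := by
    exact_mod_cast (summable_nat_add_iff 1).2 (Complex.summable_one_div_nat_cpow.2 hs)
  simpa [zeta_eq_tsum_one_div_nat_add_one_cpow hs, cpow_neg] using hsum.hasSum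

lemma hasSum_zetaTerm_of_one_lt_re {s : ℂ} (hs : 1 < s.re) :
    HasSum (zetaTerm · s) (riemannZeta s - 1 / (s - 1)) := by
  have hs1 : s ≠ 1 := by rintro rfl; simp at hs
  rw [(summable_zetaTerm (by linarith)).hasSum_iff_tendsto_nat]
  simp_rw [sum_range_zetaTerm hs1]
  have hpow := tendsto_natCast_add_one_cpow_atTop (s := 1 - s) (by simpa using hs)
  convert (hasSum_natCast_add_one_cpow_neg hs).tendsto_sum_nat.sub
    ((hpow.sub_const 1).div_const (1 - s)) using 2
  rw [← neg_sub s 1, div_neg, zero_sub, neg_div, sub_neg_eq_add, ← sub_eq_add_neg]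

lemma differentiableAt_zetaTerm {s : ℂ} (hs : s ≠ 1) (n : ℕ) :
    DifferentiableAt ℂ (zetaTerm n) s := by
  have hn : (n + 1 : ℂ) ≠ 0 := by exact_mod_cast n.succ_ne_zero
  have hn2 : (n + 2 : ℂ) ≠ 0 := by exact_mod_cast (n + 1).succ_ne_zero
  refine DifferentiableAt.congr_of_eventuallyEq ?_
    (eventually_ne_nhds hs |>.mono fun z hz => zetaTerm_eq hz n)
  fun_prop (disch := simp [*, sub_eq_zero, Ne.symm hs])

lemma differentiableOn_tsum_zetaTerm :
    DifferentiableOn ℂ (fun s => ∑' n, zetaTerm n s) {s | 0 < s.re ∧ s ≠ 1} := by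
  rintro s₀ ⟨hre, hne⟩
  set V := {s : ℂ | s₀.re / 2 < s.re} ∩ Metric.ball 0 (‖s₀‖ + 1) ∩ {1}ᶜ
  have hV : IsOpen V := ((isOpen_lt continuous_const continuous_re).inter
    Metric.isOpen_ball).inter isOpen_compl_singleton
  have hs₀ : s₀ ∈ V := ⟨⟨by simp [hre], by simp⟩, hne⟩
  have hbound : ∀ n, ∀ s ∈ V,
      ‖zetaTerm n s‖ ≤ (‖s₀‖ + 1) * ((n : ℝ) + 1) ^ (-(s₀.re / 2) - 1) := by
    rintro n s ⟨⟨hs, hsR⟩, -⟩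
    refine (norm_zetaTerm_le (by linarith [hs.out]) n).trans (mul_le_mul ?_ ?_ (by positivity)
      (by positivity))
    · simpa using hsR.out.le
    · exact Real.rpow_le_rpow_of_exponent_le (by linarith [n.cast_nonneg (α := ℝ)])
        (by linarith [hs.out])
  have hdiff := differentiableOn_tsum_of_summable_norm
    ((summable_rpow_nat_add_one (by linarith)).mul_left _)
    (fun n s hs => (differentiableAt_zetaTerm hs.2 n).differentiableWithinAt) hV hbound
  exact (hdiff.differentiableAt (hV.mem_nhds hs₀)).differentiableWithinAt

lemma riemannZeta_eq_one_div_sub_one_add_tsum_zetaTerm {s : ℂ} (hs : 0 < s.re) (hs1 : s ≠ 1) :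
    riemannZeta s = 1 / (s - 1) + ∑' n, zetaTerm n s := by
  have h_of_one_lt : ∀ z : ℂ, 1 < z.re → riemannZeta z = 1 / (z - 1) + ∑' n, zetaTerm n z :=
    fun z hz => by rw [(hasSum_zetaTerm_of_one_lt_re hz).tsum_eq]; ring
  rcases lt_or_ge 1 s.re with h | h
  · exact h_of_one_lt s h
  -- the half-plane slit along `[1, ∞)`: star-convex about `1/2` and avoiding the pole
  set D := {z : ℂ | 0 < z.re} ∩ {z | 1 - z ∈ slitPlane}
  have hD : D ⊆ {z | 0 < z.re ∧ z ≠ 1} := fun z hz =>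
    ⟨hz.1, by rintro rfl; simpa using hz.2⟩
  have hD_open : IsOpen D := (isOpen_lt continuous_const continuous_re).inter
    (isOpen_slitPlane.preimage (continuous_const.sub continuous_id))
  have hD_conn : IsPreconnected D := by
    have hslit : StarConvex ℝ (1 / 2 : ℂ) {z : ℂ | 1 - z ∈ slitPlane} := by
      have hf :
          (AffineMap.const ℝ ℂ (1 : ℂ) - AffineMap.id ℝ ℂ) (1 / 2) = ((1 / 2 : ℝ) : ℂ) := by
        norm_num
      exact StarConvex.affine_preimage _ (hf ▸ starConvex_ofReal_slitPlane (by norm_num))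
    exact (((convex_halfSpace_re_gt 0).starConvex (by norm_num)).inter hslit).isPathConnected
      ⟨by norm_num, by norm_num [mem_slitPlane_iff]⟩ |>.isConnected.isPreconnected
  have hζ : AnalyticOnNhd ℂ riemannZeta D := DifferentiableOn.analyticOnNhd
    (fun z hz => (differentiableAt_riemannZeta (hD hz).2).differentiableWithinAt) hD_open
  have hrhs : AnalyticOnNhd ℂ (fun z => 1 / (z - 1) + ∑' n, zetaTerm n z) D := by
    refine DifferentiableOn.analyticOnNhd (.add ?_ (differentiableOn_tsum_zetaTerm.mono hD))
      hD_open
    exact fun z hz => DifferentiableWithinAt.div (by fun_prop) (by fun_prop)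
      (sub_ne_zero.2 (hD hz).2)
  have hev : riemannZeta =ᶠ[𝓝 (2 + I)] fun z => 1 / (z - 1) + ∑' n, zetaTerm n z :=
    Filter.eventually_of_mem ((isOpen_lt continuous_const continuous_re).mem_nhds (by simp))
      h_of_one_lt
  refine hζ.eqOn_of_preconnected_of_eventuallyEq hrhs hD_conn
    ⟨by simp, by simp [mem_slitPlane_iff]⟩ hev ⟨hs, ?_⟩
  rcases h.lt_or_eq with h | h
  · exact Or.inl (by simpa using h)
  · exact Or.inr fun him => hs1 (Complex.ext (by simpa using h) (by simpa using him.symm))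

lemma riemannZeta_eq_sum_sub_add_tsum_zetaTerm {s : ℂ} (hs : 0 < s.re) (hs1 : s ≠ 1) (N : ℕ) :
    riemannZeta s = ∑ n ∈ Finset.range N, (n + 1 : ℂ) ^ (-s)
      - (N + 1 : ℂ) ^ (1 - s) / (1 - s) + ∑' n, zetaTerm (n + N) s := by
  rw [riemannZeta_eq_one_div_sub_one_add_tsum_zetaTerm hs hs1,
    ← (summable_zetaTerm hs).sum_add_tsum_nat_add N, sum_range_zetaTerm hs1,
    ← neg_sub 1 s, div_neg]
  ring

lemma tsum_rpow_nat_add_le {σ : ℝ} (hσ : 0 < σ) {N : ℕ} (hN : 0 < N) :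
    ∑' n : ℕ, ((n + N + 1 : ℕ) : ℝ) ^ (-σ - 1) ≤ (N : ℝ) ^ (-σ) / σ := by
  have hN' : (0 : ℝ) < N := by exact_mod_cast hN
  have h := AntitoneOn.tsum_comp_add_le_integral N (f := fun x : ℝ => x ^ (-σ - 1))
    (fun x hx y _ hxy => Real.rpow_le_rpow_of_nonpos (hN'.trans_le hx) hxy (by linarith))
    (integrableOn_Ioi_rpow_of_lt (by linarith) hN')
    (fun t ht => Real.rpow_nonneg (hN'.trans ht).le _)
  rwa [integral_Ioi_rpow_of_lt (by linarith) hN', sub_add_cancel, neg_div_neg_eq] at h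

lemma norm_tsum_zetaTerm_nat_add_le {s : ℂ} (hs : 0 < s.re) {N : ℕ} (hN : 0 < N) :
    ‖∑' n, zetaTerm (n + N) s‖ ≤ ‖s‖ * ((N : ℝ) ^ (-s.re) / s.re) := by
  have hbound :
      ∀ n, ‖zetaTerm (n + N) s‖ ≤ ‖s‖ * ((n + N + 1 : ℕ) : ℝ) ^ (-s.re - 1) :=
    fun n => by exact_mod_cast norm_zetaTerm_le (by linarith) (n + N)
  have hsum : Summable fun n : ℕ => ((n + N + 1 : ℕ) : ℝ) ^ (-s.re - 1) :=
    (summable_nat_add_iff (N + 1)).2 (Real.summable_nat_rpow.2 (by linarith))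
  calc ‖∑' n, zetaTerm (n + N) s‖
      ≤ ∑' n : ℕ, ‖s‖ * ((n + N + 1 : ℕ) : ℝ) ^ (-s.re - 1) :=
        tsum_of_norm_bounded (hsum.mul_left _).hasSum hbound
    _ = ‖s‖ * ∑' n : ℕ, ((n + N + 1 : ℕ) : ℝ) ^ (-s.re - 1) := tsum_mul_left
    _ ≤ ‖s‖ * ((N : ℝ) ^ (-s.re) / s.re) := by gcongr; exact tsum_rpow_nat_add_le hs hN

lemma norm_sum_range_cpow_neg_le {s : ℂ} (hs : 1 / 2 ≤ s.re) (N : ℕ) :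
    ‖∑ n ∈ Finset.range N, (n + 1 : ℂ) ^ (-s)‖ ≤ 2 * √N := by
  have hterm : ∀ n : ℕ, ‖(n + 1 : ℂ) ^ (-s)‖ ≤ 2 * (√(n + 1 : ℕ) - √n) := by
    intro n
    have hsq₁ := Real.sq_sqrt (by positivity : (0 : ℝ) ≤ n + 1)
    have hsq₀ := Real.sq_sqrt (n.cast_nonneg (α := ℝ))
    rw [norm_natCast_add_one_cpow, Nat.cast_add_one]
    calc ((n : ℝ) + 1) ^ (-s).re ≤ ((n : ℝ) + 1) ^ (-(1 / 2) : ℝ) :=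
          Real.rpow_le_rpow_of_exponent_le (by linarith [n.cast_nonneg (α := ℝ)])
            (by simp; linarith)
      _ = 1 / √(n + 1) := by
          rw [Real.sqrt_eq_rpow, Real.rpow_neg (by positivity), inv_eq_one_div]
      _ ≤ 2 * (√(n + 1) - √n) := by
          -- AM-GM: `2 √n √(n+1) ≤ 2n + 1`
          rw [div_le_iff₀ (by positivity)]
          nlinarith [sq_nonneg (√(n + 1) - √n)]
  calc ‖∑ n ∈ Finset.range N, (n + 1 : ℂ) ^ (-s)‖
      ≤ ∑ n ∈ Finset.range N, 2 * (√(n + 1 : ℕ) - √n) :=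
        (norm_sum_le _ _).trans (Finset.sum_le_sum fun n _ => hterm n)
    _ = 2 * √N := by
        rw [← Finset.mul_sum, Finset.sum_range_sub (fun n => √(n : ℝ))]
        simp

lemma norm_natCast_add_one_cpow_one_sub_div_le {s : ℂ} (hs : 1 / 2 ≤ s.re) (him : s.im ≠ 0)
    (N : ℕ) :
    ‖(N + 1 : ℂ) ^ (1 - s) / (1 - s)‖ ≤ √(N + 1) / |s.im| := by
  have hnum : ((N : ℝ) + 1) ^ (1 - s).re ≤ √(N + 1) := by
    rw [Real.sqrt_eq_rpow]
    exact Real.rpow_le_rpow_of_exponent_le (by linarith [N.cast_nonneg (α := ℝ)])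
      (by simp; linarith)
  rw [norm_div, norm_natCast_add_one_cpow]
  exact div_le_div₀ (Real.sqrt_nonneg _) hnum (abs_pos.2 him)
    (by simpa using abs_im_le_norm (1 - s))

lemma norm_riemannZeta_le {s : ℂ} (hs : 1 / 2 ≤ s.re) (him : s.im ≠ 0) {N : ℕ}
    (hN : 0 < N) :
    ‖riemannZeta s‖ ≤ 2 * √N + √(N + 1) / |s.im| + (1 + 2 * |s.im|) / √N := by
  have hσ : 0 < s.re := by linarith
  have hs1 : s ≠ 1 := fun h => him (by simp [h])
  have htail : ‖s‖ * ((N : ℝ) ^ (-s.re) / s.re) ≤ (1 + 2 * |s.im|) / √N := by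
    have hnorm : ‖s‖ / s.re ≤ 1 + 2 * |s.im| := by
      rw [div_le_iff₀ hσ]
      nlinarith [norm_le_abs_re_add_abs_im s, abs_of_pos hσ, abs_nonneg s.im]
    have hpow : (N : ℝ) ^ (-s.re) ≤ 1 / √N := by
      rw [Real.sqrt_eq_rpow, ← inv_eq_one_div, ← Real.rpow_neg N.cast_nonneg]
      exact Real.rpow_le_rpow_of_exponent_le (by exact_mod_cast hN) (by linarith)
    calc ‖s‖ * ((N : ℝ) ^ (-s.re) / s.re) = ‖s‖ / s.re * (N : ℝ) ^ (-s.re) := by ring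
      _ ≤ (1 + 2 * |s.im|) * (1 / √N) := by gcongr
      _ = (1 + 2 * |s.im|) / √N := mul_one_div _ _
  rw [riemannZeta_eq_sum_sub_add_tsum_zetaTerm hσ hs1 N]
  refine (norm_add_le_of_le (norm_sub_le _ _) le_rfl).trans ?_
  gcongr
  · exact norm_sum_range_cpow_neg_le hs N
  · exact norm_natCast_add_one_cpow_one_sub_div_le hs him N
  · exact (norm_tsum_zetaTerm_nat_add_le hσ hN).trans htail

/-- There exists a positive constant `c₁` such that for all real `σ ≥ 1/2` and all real `t`
with `|t| ≥ 2`, `|ζ(σ + it)| ≤ c₁ |t|^{1/2}`. -/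
theorem zeta_bound_sqrt :
    ∃ c₁ : ℝ, 0 < c₁ ∧ ∀ σ t : ℝ, 1 / 2 ≤ σ → 2 ≤ |t| →
      ‖riemannZeta ((σ : ℂ) + t * I)‖ ≤ c₁ * |t| ^ ((1 : ℝ) / 2) := by
  refine ⟨8, by norm_num, fun σ t hσ ht => ?_⟩
  set N := ⌊|t|⌋₊
  have hN : 2 ≤ N := Nat.le_floor (by exact_mod_cast ht)
  have hN1 : (1 : ℝ) ≤ N := by exact_mod_cast one_le_two.trans hN
  have hNt : (N : ℝ) ≤ |t| := Nat.floor_le (abs_nonneg t)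
  have htN : |t| < N + 1 := Nat.lt_floor_add_one _
  have hre : ((σ : ℂ) + t * I).re = σ := by simp
  have him : ((σ : ℂ) + t * I).im = t := by simp
  have hζ := norm_riemannZeta_le (hre ▸ hσ) (by rw [him]; rintro rfl; norm_num at ht)
    (N := N) (by omega)
  rw [him] at hζ
  have hsqrt : √N ≤ |t| ^ ((1 : ℝ) / 2) := Real.sqrt_eq_rpow _ ▸ Real.sqrt_le_sqrt hNt
  have hsqrt1 : 1 ≤ √N := Real.one_le_sqrt.2 hN1
  have hboundary : √(N + 1) / |t| ≤ 1 :=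
    div_le_one_of_le₀ (Real.sqrt_le_iff.2 ⟨abs_nonneg t, by nlinarith⟩) (abs_nonneg t)
  have htail : (1 + 2 * |t|) / √N ≤ 5 * √N := by
    rw [div_le_iff₀ (by positivity), mul_assoc, Real.mul_self_sqrt (by positivity)]
    linarith
  linarith
end

section
/- (Borel–Carathéodory) Let f be analytic on the closed disc |z − z₀| ≤ R and let 0 < r < R. Then for every z with |z − z₀| ≤ r, |f(z) − f(z₀)| ≤ (2r/(R − r)) · (A(R) − Re f(z₀)), where A(R) = max_{|z − z₀| ≤ R} Re f(z). -/
/-!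
Translate to the origin and apply `Complex.borelCaratheodory_zero`, the bound for functions
vanishing there, which comes from the Schwarz lemma for `g / (2M - g)`. That bound needs
`M > 0`, so it is applied to every `M' > A - Re f(z₀)` and one lets `M'` decrease to
`A - Re f(z₀)`.
-/

open Complex Metric Filter Topology

namespace Complex

variable {f : ℂ → ℂ} {z₀ z : ℂ} {M R : ℝ}

theorem borelCaratheodory_sub_center_of_pos (hM : 0 < M)
    (hf : DifferentiableOn ℂ f (ball z₀ R)) (hre : ∀ w ∈ ball z₀ R, (f w - f z₀).re ≤ M)
    (hz : z ∈ ball z₀ R) :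
    ‖f z - f z₀‖ ≤ 2 * M * ‖z - z₀‖ / (R - ‖z - z₀‖) := by
  set g : ℂ → ℂ := fun w => f (w + z₀) - f z₀
  have hR : 0 < R := pos_of_mem_ball hz
  have hball : ∀ w, w ∈ ball (0 : ℂ) R ↔ w + z₀ ∈ ball z₀ R := fun w => by
    rw [mem_ball_zero_iff, mem_ball, dist_eq_norm, add_sub_cancel_right]
  have hg : DifferentiableOn ℂ g (ball 0 R) := fun w hw =>
    ((hf.differentiableAt (isOpen_ball.mem_nhds ((hball w).1 hw))).comp w
      (differentiableAt_id.add_const z₀)).sub_const _ |>.differentiableWithinAt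
  have hz' : z - z₀ ∈ ball (0 : ℂ) R := (hball _).2 (by rwa [sub_add_cancel])
  simpa [g] using borelCaratheodory_zero hM hg (fun w hw => hre _ ((hball w).1 hw)) hR hz'
    (by simp [g])

theorem borelCaratheodory_sub_center
    (hf : DifferentiableOn ℂ f (ball z₀ R)) (hre : ∀ w ∈ ball z₀ R, (f w - f z₀).re ≤ M)
    (hz : z ∈ ball z₀ R) :
    ‖f z - f z₀‖ ≤ 2 * M * ‖z - z₀‖ / (R - ‖z - z₀‖) := by
  have hM : 0 ≤ M := by
    simpa using hre z₀ (mem_ball_self (pos_of_mem_ball hz))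
  have hlim : Tendsto (fun M' : ℝ => 2 * M' * ‖z - z₀‖ / (R - ‖z - z₀‖)) (𝓝[>] M)
      (𝓝 (2 * M * ‖z - z₀‖ / (R - ‖z - z₀‖))) :=
    tendsto_nhdsWithin_of_tendsto_nhds (Continuous.tendsto (by fun_prop) M)
  refine ge_of_tendsto hlim (eventually_nhdsWithin_of_forall fun M' (hM' : M < M') => ?_)
  exact borelCaratheodory_sub_center_of_pos (hM.trans_lt hM') hf
    (fun w hw => (hre w hw).trans hM'.le) hz

end Complex

theorem borel_caratheodory_general
    (f : ℂ → ℂ) (z₀ : ℂ) (R r : ℝ) (hrR : r < R)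
    (hf : ∀ z ∈ closedBall z₀ R, AnalyticAt ℂ f z)
    (A : ℝ) (hA : IsGreatest ((fun z => (f z).re) '' closedBall z₀ R) A) :
    ∀ z ∈ closedBall z₀ r,
      ‖f z - f z₀‖ ≤ (2 * r / (R - r)) * (A - (f z₀).re) := by
  intro z hz
  have hzr : ‖z - z₀‖ ≤ r := mem_closedBall_iff_norm.1 hz
  have hre : ∀ w ∈ ball z₀ R, (f w - f z₀).re ≤ A - (f z₀).re := fun w hw =>
    sub_le_sub_right (hA.2 ⟨w, ball_subset_closedBall hw, rfl⟩) _
  have hr : 0 ≤ r := (norm_nonneg _).trans hzr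
  have hA₀ : 0 ≤ A - (f z₀).re :=
    sub_nonneg.2 (hA.2 ⟨z₀, mem_closedBall_self (hr.trans hrR.le), rfl⟩)
  have hdiff : DifferentiableOn ℂ f (ball z₀ R) := fun w hw =>
    (hf w (ball_subset_closedBall hw)).differentiableAt.differentiableWithinAt
  calc ‖f z - f z₀‖
      ≤ 2 * (A - (f z₀).re) * ‖z - z₀‖ / (R - ‖z - z₀‖) :=
        Complex.borelCaratheodory_sub_center hdiff hre (closedBall_subset_ball hrR hz)
    _ ≤ 2 * (A - (f z₀).re) * r / (R - r) := by gcongr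
    _ = 2 * r / (R - r) * (A - (f z₀).re) := by ring

/-- **Borel–Carathéodory.** Let `f` be analytic on the closed disc `|z − z₀| ≤ R` and let
`0 < r < R`.  Then for every `z` with `|z − z₀| ≤ r`,
`|f z − f z₀| ≤ (2r/(R − r)) (A(R) − Re (f z₀))`, where `A(R)` is the maximum of `Re (f z)`
over the closed disc `|z − z₀| ≤ R`. -/
theorem borel_caratheodory
    (f : ℂ → ℂ) (z₀ : ℂ) (R r : ℝ) (hr : 0 < r) (hrR : r < R)
    (hf : ∀ z ∈ closedBall z₀ R, AnalyticAt ℂ f z)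
    (A : ℝ) (hA : IsGreatest ((fun z => (f z).re) '' closedBall z₀ R) A) :
    ∀ z ∈ closedBall z₀ r,
      ‖f z - f z₀‖ ≤ (2 * r / (R - r)) * (A - (f z₀).re) :=
  borel_caratheodory_general f z₀ R r hrR hf A hA
end
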